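/- Policy improvement: in a finite MDP with γ ∈ [0,1), if a deterministic policy π' satisfies Q^π(s, π'(s)) ≥ V^π(s) for all states s (where π is any stationary policy), then V^{π'}(s) ≥ V^π(s) for all s. -/

import Mathlib

/-!
Write `u = V^π - V^{π'}`. Subtracting the Bellman equation of `π'` from the improvement
hypothesis gives `u ≤ γ P_{π'} u`. At a state where `u` is maximal, averaging against the
stochastic row `P_{π'}(s, ·)` cannot exceed the maximum `M`, so `M ≤ γ M`, whence `M ≤ 0`.
-/

open Finset

theorem sum_mul_le_of_forall_le {ι : Type*} [Fintype ι] {w u : ι → ℝ} {M : ℝ}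
    (hw : ∀ i, 0 ≤ w i) (hw1 : ∑ i, w i = 1) (hu : ∀ i, u i ≤ M) :
    ∑ i, w i * u i ≤ M :=
  calc ∑ i, w i * u i ≤ ∑ i, w i * M :=
        sum_le_sum fun i _ => mul_le_mul_of_nonneg_left (hu i) (hw i)
    _ = M := by rw [← sum_mul, hw1, one_mul]

section MarkovRewardProcess

variable {S : Type*} [Fintype S] {K : S → S → ℝ} {γ : ℝ}

theorem nonpos_of_le_discount_mul_sum (hKnn : ∀ s s', 0 ≤ K s s')
    (hK1 : ∀ s, ∑ s', K s s' = 1) (hγ0 : 0 ≤ γ) (hγ1 : γ < 1) {u : S → ℝ}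
    (hu : ∀ s, u s ≤ γ * ∑ s', K s s' * u s') (s : S) :
    u s ≤ 0 := by
  obtain ⟨s₀, -, hmax⟩ := exists_max_image univ u ⟨s, mem_univ s⟩
  have hM : u s₀ ≤ γ * u s₀ :=
    (hu s₀).trans <| mul_le_mul_of_nonneg_left
      (sum_mul_le_of_forall_le (hKnn s₀) (hK1 s₀) fun t => hmax t (mem_univ t)) hγ0
  have hM0 : u s₀ ≤ 0 := by nlinarith
  exact (hmax s (mem_univ s)).trans hM0

theorem le_of_le_bellman_of_eq_bellman (hKnn : ∀ s s', 0 ≤ K s s')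
    (hK1 : ∀ s, ∑ s', K s s' = 1) (hγ0 : 0 ≤ γ) (hγ1 : γ < 1) {r V W : S → ℝ}
    (hV : ∀ s, V s ≤ r s + γ * ∑ s', K s s' * V s')
    (hW : ∀ s, W s = r s + γ * ∑ s', K s s' * W s') (s : S) :
    V s ≤ W s := by
  refine sub_nonpos.mp
    (nonpos_of_le_discount_mul_sum (u := V - W) hKnn hK1 hγ0 hγ1 (fun t => ?_) s)
  simp only [Pi.sub_apply, mul_sub, sum_sub_distrib]
  linarith [hV t, hW t]

end MarkovRewardProcess

theorem policy_improvement_general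
    {S A : Type*} [Fintype S]
    (P : S → A → S → ℝ) (hPnn : ∀ s a s', 0 ≤ P s a s')
    (hP1 : ∀ s a, (∑ s', P s a s') = 1)
    (R : S → A → ℝ) (γ : ℝ) (hγ0 : 0 ≤ γ) (hγ1 : γ < 1)
    (Vπ : S → ℝ)
    (Qπ : S → A → ℝ)
    (hQπ : ∀ s a, Qπ s a = R s a + γ * ∑ s', P s a s' * Vπ s')
    (π' : S → A)
    (himprove : ∀ s, Vπ s ≤ Qπ s (π' s))
    (Vπ' : S → ℝ)
    (hVπ' : ∀ s, Vπ' s = R s (π' s) + γ * ∑ s', P s (π' s) s' * Vπ' s') :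
    ∀ s, Vπ s ≤ Vπ' s :=
  le_of_le_bellman_of_eq_bellman (fun s => hPnn s (π' s)) (fun s => hP1 s (π' s)) hγ0 hγ1
    (fun s => hQπ s (π' s) ▸ himprove s) hVπ'

/-- Policy improvement: if a deterministic policy `π'` satisfies
`Q^π(s, π'(s)) ≥ V^π(s)` for all `s`, then `V^{π'}(s) ≥ V^π(s)` for all `s`. -/
theorem policy_improvement
    {S A : Type*} [Fintype S] [Nonempty S] [Fintype A]
    (Act : S → Finset A) (hAct : ∀ s, (Act s).Nonempty)
    (P : S → A → S → ℝ) (hPnn : ∀ s a s', 0 ≤ P s a s')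
    (hP1 : ∀ s a, (∑ s', P s a s') = 1)
    (R : S → A → ℝ) (γ : ℝ) (hγ0 : 0 ≤ γ) (hγ1 : γ < 1)
    (π : S → A → ℝ) (hπnn : ∀ s a, 0 ≤ π s a)
    (hπ1 : ∀ s, (∑ a ∈ Act s, π s a) = 1)
    (Vπ : S → ℝ)
    (hVπ : ∀ s, Vπ s =
      ∑ a ∈ Act s, π s a * (R s a + γ * ∑ s', P s a s' * Vπ s'))
    (Qπ : S → A → ℝ)
    (hQπ : ∀ s a, Qπ s a = R s a + γ * ∑ s', P s a s' * Vπ s')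
    (π' : S → A) (hπ' : ∀ s, π' s ∈ Act s)
    (himprove : ∀ s, Vπ s ≤ Qπ s (π' s))
    (Vπ' : S → ℝ)
    (hVπ' : ∀ s, Vπ' s = R s (π' s) + γ * ∑ s', P s (π' s) s' * Vπ' s') :
    ∀ s, Vπ s ≤ Vπ' s :=
  policy_improvement_general P hPnn hP1 R γ hγ0 hγ1 Vπ Qπ hQπ π' himprove Vπ' hVπ'
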